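/- Let n, k ≥ 1, let a, b : {1,…,n} → ℤ² be sequences of points such that the multiset T has at most k distinct points, let σ be an optimal matching, and let (L,v) be a grid with cell size L ≥ 1 and shift v ∈ {0,…,L−1}². Then 2·#{i : ‖a(i) − b(σ(i))‖₁ ≥ 2kL} ≤ k·D_{L,v}(a,b). -/

import Mathlib

/-- ℓ1 norm on ℤ². -/
def l1 (p : ℤ × ℤ) : ℤ := |p.1| + |p.2|

/-- Earth-mover distance between the multisets {a 1,…,a n} and {b 1,…,b n}:
the minimum over permutations σ of ∑ i, ‖a i − b (σ i)‖₁. -/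
noncomputable def EMD {n : ℕ} (a b : Fin n → ℤ × ℤ) : ℤ :=
  Finset.univ.inf' Finset.univ_nonempty
    (fun σ : Equiv.Perm (Fin n) => ∑ i, l1 (a i - b (σ i)))

/-- The grid cell of a point p for the grid of cell size L shifted by v
(floor division; `/` on ℤ with positive divisor is floor division). -/
def cell (L : ℕ) (v p : ℤ × ℤ) : ℤ × ℤ :=
  ((p.1 - v.1) / (L : ℤ), (p.2 - v.2) / (L : ℤ))

/-- The grid ℓ1-difference D_{L,v}(a,b) = Σ_{c∈ℤ²} |#{i : cell(a i) = c} − #{i : cell(b i) = c}|,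
where the (finite) sum is taken over the cells actually occupied (all other terms vanish). -/
def D {n : ℕ} (L : ℕ) (v : ℤ × ℤ) (a b : Fin n → ℤ × ℤ) : ℤ :=
  ∑ c ∈ ((Finset.univ.image fun i => cell L v (a i)) ∪
         (Finset.univ.image fun i => cell L v (b i))),
    |((Finset.univ.filter fun i => cell L v (a i) = c).card : ℤ) -
      ((Finset.univ.filter fun i => cell L v (b i) = c).card : ℤ)|

/-! Fix a target point `t` and let `F` be the long edges of `σ` ending at `t`. Each index `j`
gives an arrow from the cell of `a j` to the cell of `b (σ j)`; let `R` be the set of cells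
reachable from the cell of `t`. No arrow leaves `R`, so at most `D/2` arrows enter it, and the
edges of `F` enter it unless the source cell of one of them, `i`, lies in `R`. In that case a
path of arrows with distinct cells closes, together with `i`, a cycle of at most `k` edges
(its cells are cells of points of `T`). Rematching along the cycle inside cells costs at most
`k * 2 * (L - 1) < 2 * k * L ≤ l1 (a i - b (σ i))`, contradicting optimality. Hence
`2 * #F ≤ D`, and summing over the at most `k` targets gives the claim. -/

open Finset

theorem sum_le_sum_of_optimal {ι M : Type*} [Fintype ι] [AddCommMonoid M] [PartialOrder M]
    [IsOrderedCancelAddMonoid M] (w : ι → ι → M) (σ : Equiv.Perm ι)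
    (hopt : ∀ τ : Equiv.Perm ι, ∑ i, w i (σ i) ≤ ∑ i, w i (τ i))
    (π : Equiv.Perm ι) (s : Finset ι) (hs : ∀ x ∉ s, π x = x) :
    ∑ x ∈ s, w x (σ x) ≤ ∑ x ∈ s, w (π x) (σ x) := by
  classical
  have h := hopt (π.symm.trans σ)
  rw [← Equiv.sum_comp π (fun i => w i ((π.symm.trans σ) i))] at h
  simp only [Equiv.trans_apply, Equiv.symm_apply_apply] at h
  have hcompl : ∑ x ∈ sᶜ, w (π x) (σ x) = ∑ x ∈ sᶜ, w x (σ x) :=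
    sum_congr rfl fun x hx => by rw [hs x (mem_compl.mp hx)]
  rw [← sum_add_sum_compl s (fun x => w x (σ x)), ← sum_add_sum_compl s (fun x => w (π x) (σ x)),
    hcompl] at h
  exact le_of_add_le_add_right h

theorem Int.abs_sub_lt_of_ediv_eq {x y L : ℤ} (hL : 0 < L) (h : x / L = y / L) : |x - y| < L := by
  have hx := Int.ediv_mul_le x hL.ne'
  have hx' := Int.lt_ediv_add_one_mul_self x hL
  have hy := Int.ediv_mul_le y hL.ne'
  have hy' := Int.lt_ediv_add_one_mul_self y hL
  rw [h] at hx hx'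
  rw [abs_lt]
  constructor <;> nlinarith

theorem l1_nonneg (p : ℤ × ℤ) : 0 ≤ l1 p := add_nonneg (abs_nonneg _) (abs_nonneg _)

theorem l1_sub_le_of_cell_eq {L : ℕ} (hL : 1 ≤ L) {v p q : ℤ × ℤ} (h : cell L v p = cell L v q) :
    l1 (p - q) ≤ 2 * ((L : ℤ) - 1) := by
  have hL' : (0 : ℤ) < L := by exact_mod_cast hL
  have h₁ := Int.abs_sub_lt_of_ediv_eq hL' (congrArg Prod.fst h)
  have h₂ := Int.abs_sub_lt_of_ediv_eq hL' (congrArg Prod.snd h)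
  simp only [sub_sub_sub_cancel_right] at h₁ h₂
  simp only [l1, Prod.fst_sub, Prod.snd_sub]
  omega

theorem sum_card_fiber_mul {ι C : Type*} [Fintype ι] [DecidableEq C] (g : ι → C) (S : Finset C)
    (hg : ∀ j, g j ∈ S) (w : C → ℤ) :
    ∑ c ∈ S, (#{j | g j = c} : ℤ) * w c = ∑ j, w (g j) := by
  rw [← sum_fiberwise_of_maps_to (fun j _ => hg j)]
  refine sum_congr rfl fun c _ => ?_
  rw [sum_congr rfl fun j hj => by rw [(mem_filter.mp hj).2], sum_const, nsmul_eq_mul]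

theorem two_mul_card_le_sum_abs_of_closed {ι C : Type*} [Fintype ι] [DecidableEq C]
    (f g : ι → C) (S : Finset C) (hf : ∀ j, f j ∈ S) (hg : ∀ j, g j ∈ S)
    (R : Set C) (hR : ∀ j, f j ∈ R → g j ∈ R)
    (F : Finset ι) (hF : ∀ j ∈ F, f j ∉ R ∧ g j ∈ R) :
    2 * (#F : ℤ) ≤ ∑ c ∈ S, |(#{j | f j = c} : ℤ) - #{j | g j = c}| := by
  classical
  set w : C → ℤ := fun c => 2 * (if c ∈ R then 1 else 0) - 1
  have hsum : ∀ h : ι → C, ∑ j, w (h j) = 2 * (#{j | h j ∈ R} : ℤ) - Fintype.card ι := by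
    intro h
    rw [sum_sub_distrib, ← mul_sum, sum_boole]
    simp
  have hsub : univ.filter (fun j => f j ∈ R) ⊆ univ.filter (fun j => g j ∈ R) := by
    intro j; simpa using hR j
  have hFsub : F ⊆ univ.filter (fun j => g j ∈ R) \ univ.filter (fun j => f j ∈ R) := by
    intro j hj; simpa using (hF j hj).symm
  have hcard : (#F : ℤ) ≤ #{j | g j ∈ R} - #{j | f j ∈ R} := by
    have := card_le_card hFsub
    rw [card_sdiff_of_subset hsub] at this
    have := card_le_card hsub
    omega
  calc 2 * (#F : ℤ) ≤ ∑ j, w (g j) - ∑ j, w (f j) := by rw [hsum, hsum]; linarith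
    _ = ∑ c ∈ S, ((#{j | g j = c} : ℤ) - #{j | f j = c}) * w c := by
        rw [← sum_card_fiber_mul g S hg, ← sum_card_fiber_mul f S hf, ← sum_sub_distrib]
        simp only [sub_mul]
    _ ≤ ∑ c ∈ S, |(#{j | f j = c} : ℤ) - #{j | g j = c}| := by
        refine sum_le_sum fun c _ => ?_
        rw [abs_sub_comm]
        generalize (#{j | g j = c} : ℤ) - #{j | f j = c} = x
        simp only [w]
        split_ifs <;> norm_num [le_abs_self, neg_le_abs]

def ArrowRel {ι C : Type*} (f g : ι → C) (c d : C) : Prop := ∃ j, f j = c ∧ g j = d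

theorem List.IsChain.rel_formPerm {α : Type*} [DecidableEq α] {r : α → α → Prop} {l : List α}
    (hc : l.IsChain r) (hl : l.Nodup) (hne : l ≠ []) (hclose : r (l.getLast hne) (l.head hne))
    {x : α} (hx : x ∈ l) : r x (l.formPerm x) := by
  obtain ⟨s, hs, rfl⟩ := List.mem_iff_getElem.mp hx
  rw [List.formPerm_apply_getElem _ hl]
  rcases Nat.lt_or_ge (s + 1) l.length with h | h
  · simpa [Nat.mod_eq_of_lt h] using hc.getElem s h
  · have hs' : s + 1 = l.length := by omega
    rw [List.getLast_eq_getElem, List.head_eq_getElem] at hclose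
    simpa [hs', show l.length - 1 = s by omega] using hclose

theorem exists_isChain_of_reflTransGen {ι C : Type*} {f g : ι → C} {i : ι} {c : C}
    (h : Relation.ReflTransGen (ArrowRel f g) c (f i)) :
    ∃ p : List ι, (p ++ [i]).IsChain (fun x y => g x = f y) ∧ ((p ++ [i]).map f).Nodup ∧
      f ((p ++ [i]).head (by simp)) = c := by
  induction h using Relation.ReflTransGen.head_induction_on with
  | refl => exact ⟨[], by simp, by simp, rfl⟩
  | head hstep _ ih =>
    obtain ⟨j, rfl, hj⟩ := hstep
    obtain ⟨p, hchain, hnd, hhead⟩ := ih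
    by_cases hmem : f j ∈ (p ++ [i]).map f
    · -- the path already visits the cell `f j`: restart it there
      obtain ⟨s, hs, hfs⟩ := List.mem_iff_getElem.mp hmem
      have hsp : s ≤ p.length := by simp at hs; omega
      have hdrop : p.drop s ++ [i] = (p ++ [i]).drop s := (List.drop_append_of_le_length hsp).symm
      refine ⟨p.drop s, ?_, ?_, ?_⟩
      · rw [hdrop]; exact hchain.drop s
      · rw [hdrop, List.map_drop]; exact hnd.sublist (List.drop_sublist _ _)
      · rw [List.getElem_map] at hfs
        simpa [hdrop, List.head_drop] using hfs
    · refine ⟨j :: p, hchain.cons fun y hy => ?_, List.nodup_cons.mpr ⟨hmem, hnd⟩, rfl⟩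
      rw [List.head?_eq_some_head (by simp), Option.mem_some_iff] at hy
      rw [hj, ← hy, hhead]

theorem exists_cycle_of_reflTransGen {ι C : Type*} [DecidableEq ι] {f g : ι → C} {i : ι}
    (h : Relation.ReflTransGen (ArrowRel f g) (g i) (f i)) :
    ∃ l : List ι, i ∈ l ∧ (l.map f).Nodup ∧ ∀ x ∈ l, g x = f (l.formPerm x) := by
  obtain ⟨p, hchain, hnd, hhead⟩ := exists_isChain_of_reflTransGen h
  refine ⟨p ++ [i], by simp, hnd, fun x hx => hchain.rel_formPerm hnd.of_map (by simp) ?_ hx⟩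
  simpa using hhead.symm

section Matching

variable {n k L : ℕ} {a b : Fin n → ℤ × ℤ} {σ : Equiv.Perm (Fin n)} {v : ℤ × ℤ}

theorem not_reflTransGen_of_long_edge (hL : 1 ≤ L) (hT : (univ.image b).card ≤ k)
    (hopt : ∀ τ : Equiv.Perm (Fin n), ∑ i, l1 (a i - b (σ i)) ≤ ∑ i, l1 (a i - b (τ i)))
    {i : Fin n} (hi : 2 * (k : ℤ) * L ≤ l1 (a i - b (σ i))) :
    ¬ Relation.ReflTransGen (ArrowRel (fun j => cell L v (a j)) (fun j => cell L v (b (σ j))))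
      (cell L v (b (σ i))) (cell L v (a i)) := by
  intro h
  obtain ⟨l, hil, hnd, hcyc⟩ := exists_cycle_of_reflTransGen h
  set π := l.formPerm
  have hlen : l.length ≤ k := by
    have hsub : (l.map fun j => cell L v (a j)).toFinset ⊆ (univ.image b).image (cell L v) := by
      intro c hc
      obtain ⟨y, hy, rfl⟩ := List.mem_map.mp (List.mem_toFinset.mp hc)
      obtain ⟨x, hx, rfl⟩ : ∃ x ∈ l, π x = y :=
        ⟨π.symm y, List.mem_of_formPerm_apply_mem (by simpa [π] using hy), by simp⟩
      rw [← hcyc x hx]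
      exact mem_image_of_mem _ (mem_image_of_mem _ (mem_univ _))
    calc l.length = (l.map fun j => cell L v (a j)).toFinset.card := by
          rw [List.toFinset_card_of_nodup hnd, List.length_map]
      _ ≤ _ := card_le_card hsub
      _ ≤ _ := card_image_le
      _ ≤ k := hT
  have hshort : ∀ x ∈ l.toFinset, l1 (a (π x) - b (σ x)) ≤ 2 * ((L : ℤ) - 1) := fun x hx =>
    l1_sub_le_of_cell_eq hL (hcyc x (List.mem_toFinset.mp hx)).symm
  have hswap := sum_le_sum_of_optimal (fun x y => l1 (a x - b y)) σ hopt π l.toFinset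
    fun x hx => List.formPerm_apply_of_notMem (by simpa using hx)
  have hlow : l1 (a i - b (σ i)) ≤ ∑ x ∈ l.toFinset, l1 (a x - b (σ x)) :=
    single_le_sum (fun x _ => l1_nonneg _) (List.mem_toFinset.mpr hil)
  have hup := sum_le_card_nsmul _ _ _ hshort
  rw [List.toFinset_card_of_nodup hnd.of_map, nsmul_eq_mul] at hup
  have hpos : 1 ≤ l.length := List.length_pos_of_mem hil
  have hlenZ : (l.length : ℤ) * L ≤ k * L := by gcongr
  linarith

theorem two_mul_card_le_D (hL : 1 ≤ L) (hT : (univ.image b).card ≤ k)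
    (hopt : ∀ τ : Equiv.Perm (Fin n), ∑ i, l1 (a i - b (σ i)) ≤ ∑ i, l1 (a i - b (τ i)))
    (t : ℤ × ℤ) (F : Finset (Fin n))
    (hF : ∀ i ∈ F, 2 * (k : ℤ) * L ≤ l1 (a i - b (σ i)) ∧ b (σ i) = t) :
    2 * (#F : ℤ) ≤ D L v a b := by
  classical
  set f := fun j => cell L v (a j)
  set g := fun j => cell L v (b (σ j))
  set R : Set (ℤ × ℤ) := {c | Relation.ReflTransGen (ArrowRel f g) (cell L v t) c}
  have hR : ∀ j, f j ∈ R → g j ∈ R := fun j hj => hj.tail ⟨j, rfl, rfl⟩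
  have hFR : ∀ i ∈ F, f i ∉ R ∧ g i ∈ R := by
    intro i hi
    have hgi : g i = cell L v t := by simp [g, (hF i hi).2]
    refine ⟨fun hfi => not_reflTransGen_of_long_edge (v := v) hL hT hopt (hF i hi).1 ?_, ?_⟩
    · change Relation.ReflTransGen (ArrowRel f g) (g i) (f i)
      rwa [hgi]
    · rw [hgi]; exact Relation.ReflTransGen.refl
  refine (two_mul_card_le_sum_abs_of_closed f g _ (fun j => mem_union_left _
    (mem_image_of_mem _ (mem_univ j))) (fun j => mem_union_right _
    (mem_image_of_mem (fun j => cell L v (b j)) (mem_univ (σ j)))) R hR F hFR).trans (le_of_eq ?_)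
  refine sum_congr rfl fun c _ => ?_
  rw [card_equiv σ (s := {j | g j = c}) (t := {j | cell L v (b j) = c}) fun j => by simp [g]]

end Matching

theorem long_edges_le_grid_diff_general (n k : ℕ)
    (a b : Fin n → ℤ × ℤ) (hT : (Finset.univ.image b).card ≤ k)
    (σ : Equiv.Perm (Fin n))
    (hopt : ∀ τ : Equiv.Perm (Fin n),
      ∑ i, l1 (a i - b (σ i)) ≤ ∑ i, l1 (a i - b (τ i)))
    (L : ℕ) (hL : 1 ≤ L) (v : ℤ × ℤ) :
    2 * ((Finset.univ.filter fun i =>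
        2 * (k : ℤ) * (L : ℤ) ≤ l1 (a i - b (σ i))).card : ℤ) ≤
      (k : ℤ) * D L v a b := by
  classical
  set long := univ.filter fun i => 2 * (k : ℤ) * L ≤ l1 (a i - b (σ i))
  have hfib := card_eq_sum_card_fiberwise (f := fun i => b (σ i)) (t := univ.image b) (s := long)
    fun i _ => mem_image_of_mem b (mem_univ _)
  calc 2 * (#long : ℤ) = ∑ t ∈ univ.image b, 2 * (#{i ∈ long | b (σ i) = t} : ℤ) := by
        rw [hfib, Nat.cast_sum, mul_sum]
    _ ≤ ∑ t ∈ univ.image b, D L v a b := sum_le_sum fun t _ =>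
        two_mul_card_le_D hL hT hopt t _ fun i hi => by simpa [long] using hi
    _ = #(univ.image b) * D L v a b := by rw [sum_const, nsmul_eq_mul]
    _ ≤ k * D L v a b := mul_le_mul_of_nonneg_right (by exact_mod_cast hT)
        (sum_nonneg fun _ _ => abs_nonneg _)

/-- Claim 2, single level: if T has at most k distinct points and σ is
an optimal matching, then 2·#{i : ‖a i − b (σ i)‖₁ ≥ 2kL} ≤ k·D_{L,v}(a,b). -/
theorem long_edges_le_grid_diff (n k : ℕ) (hn : 1 ≤ n) (hk : 1 ≤ k)
    (a b : Fin n → ℤ × ℤ) (hT : (Finset.univ.image b).card ≤ k)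
    (σ : Equiv.Perm (Fin n))
    (hopt : ∀ τ : Equiv.Perm (Fin n),
      ∑ i, l1 (a i - b (σ i)) ≤ ∑ i, l1 (a i - b (τ i)))
    (L : ℕ) (hL : 1 ≤ L) (v : ℤ × ℤ)
    (hv : 0 ≤ v.1 ∧ v.1 < (L : ℤ) ∧ 0 ≤ v.2 ∧ v.2 < (L : ℤ)) :
    2 * ((Finset.univ.filter fun i =>
        2 * (k : ℤ) * (L : ℤ) ≤ l1 (a i - b (σ i))).card : ℤ) ≤
      (k : ℤ) * D L v a b :=
  long_edges_le_grid_diff_general n k a b hT σ hopt L hL v
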